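/- Let g ≠ 0, κ, γ > 0, d ∈ (−1,1) with C_b = g² d/(κγ) > 1, set r₀ = γ√(C_b − 1)/(√2 |g|), and let J be the real 4×4 matrix J = [[−κ, g, 0, 0], [κγ/g, −γ, 0, g r₀], [0, 0, −γ − κ, 0], [−4κ r₀, −4g r₀, 0, −2γ]]. Then the characteristic polynomial of J factors as det(J − λ I) = (λ + γ + κ) · ( λ³ + (3γ + κ)λ² + (2γ²C_b + 2γκ)λ + 8 g² κ r₀² ), where 8 g² κ r₀² = 4κγ²(C_b − 1). -/

import Mathlib

/-!
Row 2 of `J - λ I` vanishes off the diagonal, so the determinant is `-(λ + γ + κ)` times a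
`3 × 3` minor equal to minus the cubic with linear coefficient `2γ² + 2γκ + 4g²r₀²`.
The choice of `r₀` gives `2g²r₀² = γ²(C_b - 1)`, turning this coefficient into
`2γ²C_b + 2γκ` and the constant term `8g²κr₀²` into `4κγ²(C_b - 1)`.
-/

open Matrix

theorem det_fin_four_eq_mul_det_submatrix_of_row_two {R : Type*} [CommRing R]
    (A : Matrix (Fin 4) (Fin 4) R) (h0 : A 2 0 = 0) (h1 : A 2 1 = 0) (h3 : A 2 3 = 0) :
    A.det = A 2 2 * (A.submatrix ![0, 1, 3] ![0, 1, 3]).det := by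
  rw [det_succ_row A 2, Fin.sum_univ_four, h0, h1, h3]
  simp only [mul_zero, zero_mul, zero_add, add_zero]
  congr 2
  · norm_num
  · congr 1 <;> ext i <;> fin_cases i <;> rfl

noncomputable def maxwellBlochJacobian (κ γ g r : ℝ) : Matrix (Fin 4) (Fin 4) ℝ :=
  !![-κ, g, 0, 0;
     κ * γ / g, -γ, 0, g * r;
     0, 0, -γ - κ, 0;
     -4 * κ * r, -4 * g * r, 0, -2 * γ]

theorem det_maxwellBlochJacobian_sub_smul (κ γ g r x : ℝ) (hg : g ≠ 0) :
    (maxwellBlochJacobian κ γ g r - x • 1).det =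
      (x + γ + κ) * (x ^ 3 + (3 * γ + κ) * x ^ 2 + (2 * γ ^ 2 + 2 * γ * κ + 4 * g ^ 2 * r ^ 2) * x
        + 8 * g ^ 2 * κ * r ^ 2) := by
  rw [det_fin_four_eq_mul_det_submatrix_of_row_two _ (by simp [maxwellBlochJacobian])
    (by simp [maxwellBlochJacobian]) (by simp [maxwellBlochJacobian]), det_fin_three]
  simp only [maxwellBlochJacobian, Fin.isValue, Matrix.sub_apply, of_apply, cons_val', cons_val,
    cons_val_fin_one, cons_val_one, cons_val_zero, Matrix.smul_apply, one_apply_eq, smul_eq_mul,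
    mul_one, submatrix_apply, ne_eq, Fin.reduceEq, not_false_eq_true, one_apply_ne, mul_zero, sub_zero]
  field_simp
  ring

theorem two_mul_sq_mul_sq_eq_of_eq_mul_sqrt_div {g γ c r : ℝ} (hg : g ≠ 0) (hc : 0 ≤ c)
    (hr : r = γ * √c / (√2 * |g|)) :
    2 * g ^ 2 * r ^ 2 = γ ^ 2 * c := by
  rw [hr, div_pow, mul_pow, mul_pow, Real.sq_sqrt hc, Real.sq_sqrt zero_le_two, sq_abs]
  field_simp

theorem jacobian_characteristic_polynomial_factorization
    (g κ γ d : ℝ) (hg : g ≠ 0)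
    (hCb : 1 < g ^ 2 * d / (κ * γ))
    (r₀ : ℝ) (hr₀ : r₀ = γ * Real.sqrt (g ^ 2 * d / (κ * γ) - 1) / (Real.sqrt 2 * |g|))
    (J : Matrix (Fin 4) (Fin 4) ℝ)
    (hJ : J = !![-κ, g, 0, 0;
                 κ * γ / g, -γ, 0, g * r₀;
                 0, 0, -γ - κ, 0;
                 -4 * κ * r₀, -4 * g * r₀, 0, -2 * γ]) :
    (∀ x : ℝ, (J - x • (1 : Matrix (Fin 4) (Fin 4) ℝ)).det =
        (x + γ + κ) *
          (x ^ 3 + (3 * γ + κ) * x ^ 2 + (2 * γ ^ 2 * (g ^ 2 * d / (κ * γ)) + 2 * γ * κ) * x +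
            8 * g ^ 2 * κ * r₀ ^ 2)) ∧
    8 * g ^ 2 * κ * r₀ ^ 2 = 4 * κ * γ ^ 2 * (g ^ 2 * d / (κ * γ) - 1) := by
  have hr₀_sq := two_mul_sq_mul_sq_eq_of_eq_mul_sqrt_div hg (sub_nonneg.mpr hCb.le) hr₀
  have hJ' : J = maxwellBlochJacobian κ γ g r₀ := hJ
  refine ⟨fun x => ?_, by linear_combination 4 * κ * hr₀_sq⟩
  rw [hJ', det_maxwellBlochJacobian_sub_smul κ γ g r₀ x hg]
  linear_combination 2 * x * (x + γ + κ) * hr₀_sq
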